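/- arXiv:2510.14187 — 4 statements merged into one kernel-verified Lean document; each statement's English description precedes it below -/
import Mathlib

section
/- Let B ⊂ ℂ² be the open unit ball and define φ(z₁,z₂) = ((2z₁+1)/4, z₂/4). Then φ is a holomorphic self-map of B satisfying φ ∈ S̃_1(B), but φ ∉ S_1^*(B); in fact the point −(i/2)e₁ lies in D₁ but not in φ(B). Consequently S_1^*(B) is a proper subset of S̃_1(B). -/
open scoped BigOperators ComplexConjugate
open MeasureTheory Filter Set

noncomputable section

/-- `ℂ^N` with the Euclidean norm. -/
abbrev EN (N : ℕ) := EuclideanSpace ℂ (Fin N)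

/-- The open unit ball `B ⊂ ℂ^N`. -/
def unitBall (N : ℕ) : Set (EN N) := Metric.ball 0 1

/-- The inner product of the paper: `⟨z,w⟩ = Σ z_k conj(w_k)`. -/
def ipd {N : ℕ} (z w : EN N) : ℂ := ∑ k, z k * conj (w k)

/-- The radial derivative `Rf(z) = ⟨z, ∇f(z)⟩`, realized as `(Df)(z) z`. -/
def radD {N : ℕ} (f : EN N → ℂ) : EN N → ℂ := fun z => fderiv ℂ f z z

/-- Iterated radial derivative `R^{(n)}`. -/
def radDn {N : ℕ} (n : ℕ) (f : EN N → ℂ) : EN N → ℂ := radD^[n] f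

/-- `H(B)`, the holomorphic functions on the unit ball. -/
def HolB (N : ℕ) : Set (EN N → ℂ) := {f | DifferentiableOn ℂ f (unitBall N)}

/-- `S(B)`, the holomorphic self-maps of the unit ball. -/
def SelfMapB (N : ℕ) : Set (EN N → EN N) :=
  {φ | DifferentiableOn ℂ φ (unitBall N) ∧ Set.MapsTo φ (unitBall N) (unitBall N)}

/-- A normal weight, viewed as a function of the radius `t ∈ [0,1)`. -/
structure IsNormalWeight (ω : ℝ → ℝ) : Prop where
  cont : ContinuousOn ω (Set.Ico 0 1)
  pos : ∀ t ∈ Set.Ico (0:ℝ) 1, 0 < ω t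
  exists_params : ∃ δ a b : ℝ, 0 ≤ δ ∧ δ < 1 ∧ 0 < a ∧ a < b ∧
    AntitoneOn (fun t => ω t / (1 - t) ^ a) (Set.Ico δ 1) ∧
    Filter.Tendsto (fun t => ω t / (1 - t) ^ a) (nhdsWithin 1 (Set.Iio 1)) (nhds 0) ∧
    MonotoneOn (fun t => ω t / (1 - t) ^ b) (Set.Ico δ 1) ∧
    Filter.Tendsto (fun t => ω t / (1 - t) ^ b) (nhdsWithin 1 (Set.Iio 1)) Filter.atTop

/-- The set `{ω(|z|)·|R^{(n)}f(z)| : z ∈ B}`. -/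
def growthSet {N : ℕ} (ω : ℝ → ℝ) (n : ℕ) (f : EN N → ℂ) : Set ℝ :=
  (fun z => ω ‖z‖ * ‖radDn n f z‖) '' unitBall N

/-- membership in the weighted-type `n`-order growth space `H_ω^{(n)}`. -/
def MemHw {N : ℕ} (ω : ℝ → ℝ) (n : ℕ) (f : EN N → ℂ) : Prop :=
  f ∈ HolB N ∧ BddAbove (growthSet ω n f)

/-- The norm of `H_ω^{(n)}`: `‖f‖ = |f(0)| + sup_{z∈B} ω(z)|R^{(n)}f(z)|`. -/
def growthNorm {N : ℕ} (ω : ℝ → ℝ) (n : ℕ) (f : EN N → ℂ) : ℝ :=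
  ‖f 0‖ + sSup (growthSet ω n f)

/-- The operator norm of the point-evaluation functional `δ_z` on `H_ω^{(n)}`. -/
def evalNorm {N : ℕ} (ω : ℝ → ℝ) (n : ℕ) (z : EN N) : ℝ :=
  sSup {r | ∃ f : EN N → ℂ, MemHw ω n f ∧ growthNorm ω n f ≤ 1 ∧ r = ‖f z‖}

/-- The iterated integral `I_ω^k(r)`; `I_ω^0(r) := 1/ω(r)` and
`I_ω^{k+1}(r) = ∫_0^r I_ω^k(t) dt`. -/
def Iw (ω : ℝ → ℝ) : ℕ → ℝ → ℝ
  | 0 => fun r => 1 / ω r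
  | (k+1) => fun r => ∫ t in (0:ℝ)..r, Iw ω k t

/-- The condition `I_ω^k(1) < ∞` (vacuously true for `k = 0`). -/
def IwFinite (ω : ℝ → ℝ) : ℕ → Prop
  | 0 => True
  | (k+1) => BddAbove (Iw ω (k+1) '' Set.Ico (0:ℝ) 1)

/-- The Möbius automorphism `γ_α` of the unit ball. -/
def mobius {N : ℕ} (α : EN N) : EN N → EN N := fun z =>
  (1 - ipd z α)⁻¹ •
    ((α - (ipd z α / (‖α‖ : ℂ)^2) • α) -
      ((Real.sqrt (1 - ‖α‖^2) : ℂ)) • (z - (ipd z α / (‖α‖ : ℂ)^2) • α))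

/-- `S̃_p(B)`. -/
def tildeS {N : ℕ} (p : Fin N) : Set (EN N → EN N) :=
  {φ | φ ∈ SelfMapB N ∧ (∃ z ∈ unitBall N, φ z = 0) ∧
    ∀ z ∈ unitBall N, ∃ z' ∈ unitBall N, ‖φ z' p‖ = ‖φ z‖}

/-- `S_p^*(B)`. -/
def starS {N : ℕ} (p : Fin N) : Set (EN N → EN N) :=
  {φ | φ ∈ SelfMapB N ∧
    ∀ lam : ℂ, ‖lam‖ < 1 → ∃ z ∈ unitBall N, φ z = lam • EuclideanSpace.single p 1}

/-- `𝔅_{i,j}(g)(z) = Σ_{k⃗∈K_{i,j}} C^i_{k⃗} ∏_{t=1}^j R^{(k_t)}g(z)`. -/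
def frakB {N : ℕ} (i j : ℕ) (g : EN N → ℂ) (z : EN N) : ℂ :=
  ∑ k : Fin j → Fin (i+1),
    if (∀ t, 1 ≤ (k t : ℕ)) ∧ (∑ t, (k t : ℕ)) = i then
      ((i.factorial : ℂ) / (∏ t, (((k t : ℕ).factorial : ℕ) : ℂ))) * ∏ t, radDn (k t : ℕ) g z
    else 0

/-- `ℬ^n_j(ψ;g)`. -/
def scrB {N : ℕ} (n j : ℕ) (ψ g : EN N → ℂ) (z : EN N) : ℂ :=
  if j = 0 then radDn n ψ z
  else ∑ i ∈ Finset.Icc j n, (n.choose i : ℂ) * radDn (n - i) ψ z * frakB i j g z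

/-- `liminf_{|z|→1} μ(z)|R^{(n)}f(z)| > 0`. -/
def limInfPos {N : ℕ} (μ : ℝ → ℝ) (n : ℕ) (f : EN N → ℂ) : Prop :=
  ∃ c > (0:ℝ), ∃ r < (1:ℝ), ∀ z ∈ unitBall N, r < ‖z‖ → c ≤ μ ‖z‖ * ‖radDn n f z‖

/-- `lim_{|z|→1} μ(z)|R^{(n)}f(z)| = 0`. -/
def limZero {N : ℕ} (μ : ℝ → ℝ) (n : ℕ) (f : EN N → ℂ) : Prop :=
  ∀ ε > (0:ℝ), ∃ r < (1:ℝ), ∀ z ∈ unitBall N, r < ‖z‖ → μ ‖z‖ * ‖radDn n f z‖ < ε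

/-- The `(n,μ)`-condition on the pair `(ψ, g)` (with `g = φ_p`). -/
def CondNMu {N : ℕ} (μ : ℝ → ℝ) (n : ℕ) (ψ g : EN N → ℂ) : Prop :=
  (MemHw μ n ψ ∧ limInfPos μ n ψ) ∧
  ∀ j : ℕ, 1 ≤ j → j ≤ n →
    MemHw μ n (fun z => ψ z * (g z) ^ j) ∧ limZero μ n (fun z => ψ z * (g z) ^ j)

/-- The weighted composition operator `W_{ψ,φ} f = ψ·(f∘φ)`. -/
def Wop {N : ℕ} (ψ : EN N → ℂ) (φ : EN N → EN N) (f : EN N → ℂ) : EN N → ℂ :=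
  fun z => ψ z * f (φ z)

/-- Boundedness of `W_{ψ,φ} : H_ν^{(k)} → H_μ^{(n)}`. -/
def WBounded {N : ℕ} (ν μ : ℝ → ℝ) (k n : ℕ) (ψ : EN N → ℂ) (φ : EN N → EN N) : Prop :=
  ∃ C > (0:ℝ), ∀ f : EN N → ℂ, MemHw ν k f →
    MemHw μ n (Wop ψ φ f) ∧ growthNorm μ n (Wop ψ φ f) ≤ C * growthNorm ν k f

/-- The operator norm of `W_{ψ,φ} : H_ν^{(k)} → H_μ^{(n)}`. -/
def WNorm {N : ℕ} (ν μ : ℝ → ℝ) (k n : ℕ) (ψ : EN N → ℂ) (φ : EN N → EN N) : ℝ :=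
  sInf {C : ℝ | 0 ≤ C ∧ ∀ f : EN N → ℂ, MemHw ν k f →
    growthNorm μ n (Wop ψ φ f) ≤ C * growthNorm ν k f}

/-- Compactness of `W_{ψ,φ} : H_ν^{(k)} → H_μ^{(n)}`: every bounded sequence in
`H_ν^{(k)}` has a subsequence whose image converges in the norm of `H_μ^{(n)}`. -/
def WCompact {N : ℕ} (ν μ : ℝ → ℝ) (k n : ℕ) (ψ : EN N → ℂ) (φ : EN N → EN N) : Prop :=
  WBounded ν μ k n ψ φ ∧
  ∀ f : ℕ → (EN N → ℂ), (∀ s, MemHw ν k (f s)) →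
    (∃ M : ℝ, ∀ s, growthNorm ν k (f s) ≤ M) →
    ∃ σ : ℕ → ℕ, StrictMono σ ∧ ∃ g : EN N → ℂ, MemHw μ n g ∧
      Filter.Tendsto (fun s => growthNorm μ n (fun z => Wop ψ φ (f (σ s)) z - g z))
        Filter.atTop (nhds 0)

/-- First-order partial derivative `∂f/∂z_l`. -/
def pderiv1 {N : ℕ} (l : Fin N) (f : EN N → ℂ) : EN N → ℂ :=
  fun z => fderiv ℂ f z (EuclideanSpace.single l 1)

/-- Iterated partial derivative `∂^j f/(∂z_{l₁}⋯∂z_{l_j})`. -/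
def pderivs {N : ℕ} : (j : ℕ) → (Fin j → Fin N) → (EN N → ℂ) → (EN N → ℂ)
  | 0, _, f => f
  | (j+1), l, f => pderivs j (fun t => l t.succ) (pderiv1 (l 0) f)

end

/-!
The first coordinate of `φ(B)` ranges over the disc `|w - 1/4| < 1/2`, which does not contain
`-i/2` (at distance `√5/4` from `1/4`), so `φ(B)` misses `-(i/2)e₁`. On the other hand
`‖φ(z)‖ < 3/4` on `B`, while `φ` maps the real segment of `B` on the `e₁`-axis onto
`(-1/4, 3/4)·e₁`; so `0 ∈ φ(B)` and every value `‖φ(z)‖` is attained by `|φ₁|`.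
-/

theorem starS_subset_tildeS {N : ℕ} (p : Fin N) : starS p ⊆ tildeS p := by
  rintro φ ⟨hφ, hsurj⟩
  refine ⟨hφ, ?_, fun z hz => ?_⟩
  · obtain ⟨z, hz, hz0⟩ := hsurj 0 (by simp)
    exact ⟨z, hz, by rw [hz0, zero_smul]⟩
  · have hlt : ‖(‖φ z‖ : ℂ)‖ < 1 := by
      simpa using mem_ball_zero_iff.mp (hφ.2 hz)
    obtain ⟨z', hz', hz'eq⟩ := hsurj _ hlt
    exact ⟨z', hz', by simp [hz'eq]⟩

namespace EN

theorem norm_lt_iff_sq_add_sq (x : EN 2) {r : ℝ} (hr : 0 < r) :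
    ‖x‖ < r ↔ ‖x 0‖ ^ 2 + ‖x 1‖ ^ 2 < r ^ 2 := by
  rw [EuclideanSpace.norm_eq, Fin.sum_univ_two, Real.sqrt_lt' hr]

theorem mem_unitBall_iff (x : EN 2) : x ∈ unitBall 2 ↔ ‖x 0‖ ^ 2 + ‖x 1‖ ^ 2 < 1 := by
  rw [unitBall, mem_ball_zero_iff, norm_lt_iff_sq_add_sq x one_pos, one_pow]

end EN

noncomputable def counterexampleMap (z : EN 2) : EN 2 :=
  (WithLp.equiv 2 (Fin 2 → ℂ)).symm ![(2 * z 0 + 1) / 4, z 1 / 4]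

namespace counterexampleMap

@[simp]
theorem apply_zero (z : EN 2) : counterexampleMap z 0 = (2 * z 0 + 1) / 4 := by
  simp [counterexampleMap]

@[simp]
theorem apply_one (z : EN 2) : counterexampleMap z 1 = z 1 / 4 := by
  simp [counterexampleMap]

theorem differentiable : Differentiable ℂ counterexampleMap := by
  refine (differentiable_piLp 2).2 fun i => ?_
  fin_cases i <;> simp [counterexampleMap] <;> fun_prop

theorem norm_lt (z : EN 2) (hz : z ∈ unitBall 2) : ‖counterexampleMap z‖ < 3 / 4 := by
  rw [EN.mem_unitBall_iff] at hz
  rw [EN.norm_lt_iff_sq_add_sq _ (by norm_num), apply_zero, apply_one, norm_div, norm_div]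
  have h0 : ‖2 * z 0 + 1‖ ≤ 2 * ‖z 0‖ + 1 := by
    simpa using norm_add_le (2 * z 0) 1
  have ha : ‖z 0‖ < 1 := by nlinarith [norm_nonneg (z 1)]
  have h4 : ‖(4 : ℂ)‖ = 4 := by norm_num
  rw [h4]
  nlinarith [norm_nonneg (z 0), norm_nonneg (2 * z 0 + 1)]

theorem mem_selfMapB : counterexampleMap ∈ SelfMapB 2 :=
  ⟨differentiable.differentiableOn, fun z hz =>
    mem_ball_zero_iff.2 ((norm_lt z hz).trans (by norm_num))⟩

theorem exists_eq_ofReal_smul_single {t : ℝ} (ht : t ∈ Ioo (-1 / 4) (3 / 4)) :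
    ∃ z ∈ unitBall 2, counterexampleMap z = (t : ℂ) • EuclideanSpace.single 0 1 := by
  refine ⟨(((4 * t - 1) / 2 : ℝ) : ℂ) • EuclideanSpace.single 0 1, ?_, ?_⟩
  · rw [unitBall, mem_ball_zero_iff, norm_smul, PiLp.norm_single, norm_one, mul_one,
      Complex.norm_real, Real.norm_eq_abs, abs_lt]
    constructor <;> linarith [ht.1, ht.2]
  · ext i
    fin_cases i <;> simp
    ring

theorem apply_zero_ne_neg_I_div_two {z : EN 2} (hz : z ∈ unitBall 2) :
    counterexampleMap z 0 ≠ -(Complex.I / 2) := by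
  intro h
  have hz0 : z 0 = -1 / 2 - Complex.I := by
    rw [apply_zero] at h
    linear_combination h * 2
  rw [EN.mem_unitBall_iff, hz0, ← Complex.normSq_eq_norm_sq] at hz
  norm_num [Complex.normSq_apply] at hz
  nlinarith [norm_nonneg (z 1)]

theorem mem_tildeS : counterexampleMap ∈ tildeS 0 := by
  refine ⟨mem_selfMapB, ?_, fun z hz => ?_⟩
  · obtain ⟨z, hz, hz0⟩ := exists_eq_ofReal_smul_single (t := 0) (by norm_num)
    exact ⟨z, hz, by simpa using hz0⟩
  · obtain ⟨z', hz', hz'eq⟩ := exists_eq_ofReal_smul_single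
      ⟨by linarith [norm_nonneg (counterexampleMap z)], norm_lt z hz⟩
    exact ⟨z', hz', by simp [hz'eq]⟩

theorem not_mem_starS : counterexampleMap ∉ starS 0 := by
  rintro ⟨-, hsurj⟩
  obtain ⟨z, hz, hzeq⟩ := hsurj (-(Complex.I / 2)) (by norm_num)
  exact apply_zero_ne_neg_I_div_two hz (by simpa using congrArg (· 0) hzeq)

theorem neg_I_div_two_not_mem_image :
    (WithLp.equiv 2 (Fin 2 → ℂ)).symm ![-(Complex.I / 2), 0] ∉ counterexampleMap '' unitBall 2 := by
  rintro ⟨z, hz, hzeq⟩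
  exact apply_zero_ne_neg_I_div_two hz (by simpa using congrArg (· 0) hzeq)

end counterexampleMap

/-- the map `φ(z₁,z₂) = ((2z₁+1)/4, z₂/4)` belongs to `S̃_1(B)` but not to
`S_1^*(B)` (indeed `−(i/2)e₁ ∈ D₁ ∖ φ(B)`); consequently `S_1^*(B) ⊊ S̃_1(B)`. -/
theorem stmt_2
    (φ : EN 2 → EN 2)
    (hφdef : ∀ z : EN 2,
      φ z = (WithLp.equiv 2 (Fin 2 → ℂ)).symm ![(2 * z 0 + 1) / 4, z 1 / 4]) :
    φ ∈ SelfMapB 2 ∧ φ ∈ tildeS (0 : Fin 2) ∧ φ ∉ starS (0 : Fin 2) ∧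
    (‖(-(Complex.I / 2) : ℂ)‖ < 1 ∧
      (WithLp.equiv 2 (Fin 2 → ℂ)).symm ![-(Complex.I / 2), 0] ∉ φ '' unitBall 2) ∧
    starS (0 : Fin 2) ⊂ tildeS (0 : Fin 2) := by
  obtain rfl : φ = counterexampleMap := funext hφdef
  refine ⟨counterexampleMap.mem_selfMapB, counterexampleMap.mem_tildeS,
    counterexampleMap.not_mem_starS,
    ⟨by norm_num, counterexampleMap.neg_I_div_two_not_mem_image⟩, ?_⟩
  exact (ssubset_iff_of_subset (starS_subset_tildeS 0)).2
    ⟨_, counterexampleMap.mem_tildeS, counterexampleMap.not_mem_starS⟩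
end

section
/- Fix α₁,…,α_N ∈ ℝ, p ∈ {1,…,N}, and a = (a₁,…,a_N) in the open unit ball B ⊂ ℂ^N with |a_p| = max_{1≤k≤N} |a_k|. Define φ(z) = (e^{iα₁}a₁z₁, …, e^{iα_N}a_Nz_N). Then φ is a holomorphic self-map of B with φ(0) = 0, φ ∈ S̃_p(B), and φ ∉ S_p^*(B). -/
open scoped BigOperators ComplexConjugate
open MeasureTheory Filter Set

/-!
A diagonal map `z ↦ (c₁z₁, …, c_Nz_N)` with `|c_k| ≤ |c_p| < 1` contracts every point by the
factor `|c_p|`, so it is a holomorphic self-map of `B` fixing `0`. Every value `|φ(z)|` lies in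
`[0, |c_p|)` and is therefore attained as `|φ_p|` at a point of the disc `D_p`. On the other hand
`|φ_p| = |c_p| |z_p| < |c_p|` on `B`, so no point `λ e_p` with `|c_p| < |λ| < 1` is in `φ(B)`.
-/

theorem EuclideanSpace.norm_le_mul_norm_of_norm_apply_le {𝕜 ι : Type*} [RCLike 𝕜] [Fintype ι]
    {z w : EuclideanSpace 𝕜 ι} {r : ℝ} (hr : 0 ≤ r) (h : ∀ k, ‖w k‖ ≤ r * ‖z k‖) :
    ‖w‖ ≤ r * ‖z‖ := by
  rw [EuclideanSpace.norm_eq, EuclideanSpace.norm_eq, ← Real.sqrt_sq hr,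
    ← Real.sqrt_mul (sq_nonneg r), Finset.mul_sum]
  gcongr with k
  calc ‖w k‖ ^ 2 ≤ (r * ‖z k‖) ^ 2 := by gcongr; exact h k
    _ = r ^ 2 * ‖z k‖ ^ 2 := mul_pow _ _ _

theorem mem_unitBall {N : ℕ} {z : EN N} : z ∈ unitBall N ↔ ‖z‖ < 1 :=
  mem_ball_zero_iff

def diagonalMap {N : ℕ} (c : Fin N → ℂ) (z : EN N) : EN N :=
  WithLp.toLp 2 fun k => c k * z k

namespace diagonalMap

variable {N : ℕ} {c : Fin N → ℂ} {p : Fin N}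

@[simp]
theorem apply (c : Fin N → ℂ) (z : EN N) (k : Fin N) : diagonalMap c z k = c k * z k :=
  rfl

@[simp]
theorem map_zero (c : Fin N → ℂ) : diagonalMap c 0 = 0 := by
  ext k
  simp

theorem differentiable (c : Fin N → ℂ) : Differentiable ℂ (diagonalMap c) :=
  (differentiable_piLp 2).mpr fun k =>
    (differentiable_const (c k)).mul (EuclideanSpace.proj k : EN N →L[ℂ] ℂ).differentiable

theorem norm_le (hc : ∀ k, ‖c k‖ ≤ ‖c p‖) (z : EN N) : ‖diagonalMap c z‖ ≤ ‖c p‖ * ‖z‖ :=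
  EuclideanSpace.norm_le_mul_norm_of_norm_apply_le (norm_nonneg _) fun k => by
    rw [apply, norm_mul]
    exact mul_le_mul_of_nonneg_right (hc k) (norm_nonneg _)

theorem mem_selfMapB (hc : ∀ k, ‖c k‖ ≤ ‖c p‖) (hcp : ‖c p‖ < 1) :
    diagonalMap c ∈ SelfMapB N := by
  refine ⟨(differentiable c).differentiableOn, fun z hz => ?_⟩
  rw [mem_unitBall] at hz ⊢
  calc ‖diagonalMap c z‖ ≤ ‖c p‖ * ‖z‖ := norm_le hc z
    _ ≤ 1 * ‖z‖ := by gcongr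
    _ < 1 := by rwa [one_mul]

theorem mem_tildeS (hc : ∀ k, ‖c k‖ ≤ ‖c p‖) (hcp : ‖c p‖ < 1) :
    diagonalMap c ∈ tildeS p := by
  refine ⟨mem_selfMapB hc hcp, ⟨0, mem_unitBall.mpr (by simp), map_zero c⟩, fun z hz => ?_⟩
  -- when `c p = 0` also `diagonalMap c z = 0`, and the junk value `t = 0 / 0 = 0` still works
  set t : ℝ := ‖diagonalMap c z‖ / ‖c p‖
  have ht : t ≤ ‖z‖ :=
    div_le_of_le_mul₀ (norm_nonneg _) (norm_nonneg _) ((norm_le hc z).trans_eq (mul_comm _ _))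
  have ht₀ : 0 ≤ t := by positivity
  refine ⟨(t : ℂ) • EuclideanSpace.single p 1, ?_, ?_⟩
  · rw [mem_unitBall, norm_smul, PiLp.norm_single, norm_one, mul_one,
      Complex.norm_real, Real.norm_of_nonneg ht₀]
    exact ht.trans_lt (mem_unitBall.mp hz)
  · have hzero : ‖c p‖ = 0 → ‖diagonalMap c z‖ = 0 := fun h =>
      le_antisymm (by simpa [h] using norm_le hc z) (norm_nonneg _)
    rw [apply, PiLp.smul_apply, PiLp.single_eq_same, smul_eq_mul, mul_one, norm_mul,
      Complex.norm_real, Real.norm_of_nonneg ht₀]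
    exact (mul_div_assoc _ _ _).symm.trans (mul_div_cancel_left_of_imp hzero)

theorem notMem_starS (hcp : ‖c p‖ < 1) : diagonalMap c ∉ starS p := by
  rintro ⟨-, hsurj⟩
  obtain ⟨r, hcr, hr1⟩ := exists_between hcp
  have hr₀ : 0 ≤ r := (norm_nonneg _).trans hcr.le
  obtain ⟨z, hz, hzr⟩ := hsurj r (by rwa [Complex.norm_real, Real.norm_of_nonneg hr₀])
  have hp : c p * z p = r := by
    simpa using congrArg (fun w : EN N => w p) hzr
  have hzp : ‖z p‖ ≤ 1 := ((PiLp.norm_apply_le z p).trans_lt (mem_unitBall.mp hz)).le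
  have hrc : r ≤ ‖c p‖ := calc
    r = ‖c p‖ * ‖z p‖ := by rw [← norm_mul, hp, Complex.norm_real, Real.norm_of_nonneg hr₀]
    _ ≤ ‖c p‖ * 1 := by gcongr
    _ = ‖c p‖ := mul_one _
  exact hrc.not_gt hcr

end diagonalMap

/-- for `φ(z) = (e^{iα₁}a₁z₁, …, e^{iα_N}a_Nz_N)` with `a ∈ B` and
`|a_p| = max_k |a_k|`, one has `φ ∈ S(B)`, `φ(0) = 0`, `φ ∈ S̃_p(B)` and `φ ∉ S_p^*(B)`. -/
theorem stmt_3 {N : ℕ} (p : Fin N) (αv : Fin N → ℝ) (a : EN N)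
    (ha : a ∈ unitBall N) (hap : ∀ k : Fin N, ‖a k‖ ≤ ‖a p‖)
    (φ : EN N → EN N)
    (hφdef : ∀ z : EN N, φ z =
      (WithLp.equiv 2 (Fin N → ℂ)).symm
        (fun k => Complex.exp (Complex.I * (αv k : ℂ)) * a k * z k)) :
    φ ∈ SelfMapB N ∧ φ 0 = 0 ∧ φ ∈ tildeS p ∧ φ ∉ starS p := by
  set c : Fin N → ℂ := fun k => Complex.exp (Complex.I * (αv k : ℂ)) * a k
  have hφ : φ = diagonalMap c := funext fun z => by rw [hφdef]; rfl
  have hnorm_c (k : Fin N) : ‖c k‖ = ‖a k‖ := by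
    simp [c, Complex.norm_exp, mul_comm Complex.I]
  have hc (k : Fin N) : ‖c k‖ ≤ ‖c p‖ := by rw [hnorm_c, hnorm_c]; exact hap k
  have hcp : ‖c p‖ < 1 := by
    rw [hnorm_c]; exact (PiLp.norm_apply_le a p).trans_lt (mem_unitBall.mp ha)
  subst hφ
  exact ⟨diagonalMap.mem_selfMapB hc hcp, diagonalMap.map_zero c,
    diagonalMap.mem_tildeS hc hcp, diagonalMap.notMem_starS hcp⟩
end

section
/- Let ν be a normal weight on B, and let h : B → (0,∞) be a bounded function with liminf_{|z|→1} h(z) > 0. Let p ∈ {1,…,N}, let j ≥ 1 be an integer, and assume φ ∈ S_p^*(B) with φ(0) = 0 and M_p^j := sup_{w∈B} h(w)·‖δ_{φ_p(w)}^{H_ν^{(j)}}‖ < ∞. Then there exists a constant C_j > 0 such that sup_{z∈B} h(z)·‖δ_{φ(z)}^{H_ν^{(j)}}‖ ≤ C_j · M_p^j. -/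
open scoped BigOperators ComplexConjugate
open MeasureTheory Filter Set

/-!
Let `h ≥ c > 0` on `r < ‖z‖ < 1` and put `s := max ‖φ z‖ ((r + 1) / 2) < 1`. Since `φ(B) ⊇ D_p`,
some `z'` has `φ z' = s e_p`, and the Schwarz lemma gives `‖z'‖ ≥ ‖φ z'‖ = s > r`, so
`c ‖δ_{s e_p}‖ ≤ h z' ‖δ_{φ_p(z')}‖ ≤ M_p^j`.

A normal weight is almost decreasing, `ν t ≤ K ν u` for `u ≤ t`, so if `L` is a linear
contraction with `L (s e_p) = φ z`, then `f ↦ K⁻¹ (f ∘ L)` maps the unit ball of `H_ν^{(j)}` into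
itself and `‖δ_{φ z}‖ ≤ K ‖δ_{s e_p}‖`. That `‖δ_{s e_p}‖` is finite follows by integrating
`R^{(j)} f` radially `j` times, which uses that derivatives of holomorphic functions of several
variables are holomorphic.
-/

open Metric Topology

lemma differentiableAt_of_forall_differentiableAt_apply {𝕜 X E F : Type*}
    [NontriviallyNormedField 𝕜] [CompleteSpace 𝕜] [NormedAddCommGroup X] [NormedSpace 𝕜 X]
    [NormedAddCommGroup E] [NormedSpace 𝕜 E] [FiniteDimensional 𝕜 E]
    [NormedAddCommGroup F] [NormedSpace 𝕜 F] {T : X → E →L[𝕜] F} {x : X}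
    (h : ∀ e, DifferentiableAt 𝕜 (fun y => T y e) x) : DifferentiableAt 𝕜 T x := by
  let b := Module.finBasis 𝕜 E
  have hT : T = fun y =>
      ∑ i, (LinearMap.toContinuousLinearMap (b.coord i)).smulRight (T y (b i)) := by
    funext y
    refine ContinuousLinearMap.coe_injective (b.ext fun j => ?_)
    simp [Finsupp.single_apply]
  rw [hT]
  exact DifferentiableAt.fun_sum fun i _ =>
    ((ContinuousLinearMap.smulRightL 𝕜 E F _).differentiableAt).comp x (h (b i))

section HolomorphicRegularity

variable {E F : Type*} [NormedAddCommGroup E] [NormedSpace ℂ E]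
  [NormedAddCommGroup F] [NormedSpace ℂ F] {f : E → F}

lemma norm_fderiv_le_of_forall_norm_le {y : E} {r M : ℝ} (hr : 0 < r)
    (hf : DifferentiableOn ℂ f (ball y r)) (hM : ∀ x ∈ ball y r, ‖f x‖ ≤ M) :
    ‖fderiv ℂ f y‖ ≤ 2 * M / r := by
  refine Complex.norm_fderiv_le_div_of_mapsTo_ball hf (fun x hx => ?_) hr
  rw [mem_closedBall, dist_eq_norm]
  linarith [norm_sub_le (f x) (f y), hM x hx, hM y (mem_ball_self hr)]

lemma hasDerivAt_comp_add_smul {z : E} (e : E) (hf : DifferentiableAt ℂ f z) :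
    HasDerivAt (fun ζ : ℂ => f (z + ζ • e)) (fderiv ℂ f z e) 0 := by
  have hline : HasDerivAt (fun ζ : ℂ => z + ζ • e) e 0 := by
    simpa using ((hasDerivAt_id (0 : ℂ)).smul_const e).const_add z
  exact (by simpa using hf.hasFDerivAt : HasFDerivAt f (fderiv ℂ f z) (z + (0 : ℂ) • e))
    |>.comp_hasDerivAt 0 hline

lemma fderiv_apply_eq_cderiv [CompleteSpace F] {U : Set E} (hU : IsOpen U)
    (hf : DifferentiableOn ℂ f U) {z e : E} {R : ℝ} (hR : 0 < R)
    (hzR : ∀ ζ : ℂ, ‖ζ‖ ≤ R → z + ζ • e ∈ U) :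
    fderiv ℂ f z e = Complex.cderiv R (fun ζ : ℂ => f (z + ζ • e)) 0 := by
  have hV : IsOpen {ζ : ℂ | z + ζ • e ∈ U} := hU.preimage (by fun_prop)
  have hfV : DifferentiableOn ℂ (fun ζ : ℂ => f (z + ζ • e)) {ζ : ℂ | z + ζ • e ∈ U} :=
    hf.comp (by fun_prop : Differentiable ℂ fun ζ : ℂ => z + ζ • e).differentiableOn
      fun _ hζ => hζ
  have hz : z ∈ U := by simpa using hzR 0 (by simpa using hR.le)
  rw [Complex.cderiv_eq_deriv hV hfV hR fun ζ hζ => hzR ζ (by simpa using hζ),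
    (hasDerivAt_comp_add_smul e (hf.differentiableAt (hU.mem_nhds hz))).deriv]

lemma differentiableAt_cderiv_comp_add_smul [FiniteDimensional ℂ E]
    [FiniteDimensional ℂ F] {U : Set E} (hU : IsOpen U)
    (hf : DifferentiableOn ℂ f U) {z₀ e : E} {r R B : ℝ} (hr : 0 < r) (hR : 0 < R)
    (hsub : ∀ z ∈ ball z₀ r, ∀ θ : ℝ, z + circleMap 0 R θ • e ∈ U)
    (hB : ∀ z ∈ ball z₀ r, ∀ θ : ℝ, ‖fderiv ℂ f (z + circleMap 0 R θ • e)‖ ≤ B) :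
    DifferentiableAt ℂ (fun z => Complex.cderiv R (fun ζ : ℂ => f (z + ζ • e)) 0) z₀ := by
  borelize E
  -- `c θ dθ = dζ / ζ ^ 2` along the circle `ζ = circleMap 0 R θ`
  set c : ℝ → ℂ := fun θ => deriv (circleMap 0 R) θ * ((circleMap 0 R θ) ^ 2)⁻¹
  have hc : Continuous c := by
    simp only [c, deriv_circleMap]
    exact ((continuous_circleMap 0 R).mul continuous_const).mul
      (((continuous_circleMap 0 R).pow 2).inv₀ fun θ => by simp [circleMap_ne_center hR.ne'])
  have hnc : ∀ θ, ‖c θ‖ = R⁻¹ := fun θ => by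
    simp only [c, deriv_circleMap, sq, mul_inv_rev, Complex.norm_mul, norm_circleMap_zero,
      abs_of_pos hR, Complex.norm_I, mul_one, norm_inv]
    field_simp
  have hcderiv : (fun z => Complex.cderiv R (fun ζ : ℂ => f (z + ζ • e)) 0) =
      fun z => (2 * Real.pi * Complex.I)⁻¹ •
        ∫ θ in (0 : ℝ)..2 * Real.pi, c θ • f (z + circleMap 0 R θ • e) := by
    funext z
    simp only [Complex.cderiv, circleIntegral, sub_zero, smul_smul, c]
  have hcont : ∀ z ∈ ball z₀ r, Continuous fun θ => c θ • f (z + circleMap 0 R θ • e) :=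
    fun z hz => hc.smul <| hf.continuousOn.comp_continuous (by fun_prop) (hsub z hz)
  have hpath : Continuous fun θ => z₀ + circleMap 0 R θ • e := by fun_prop
  have hderiv : HasFDerivAt
      (fun z => ∫ θ in (0 : ℝ)..2 * Real.pi, c θ • f (z + circleMap 0 R θ • e))
      (∫ θ in (0 : ℝ)..2 * Real.pi, c θ • fderiv ℂ f (z₀ + circleMap 0 R θ • e)) z₀ := by
    refine intervalIntegral.hasFDerivAt_integral_of_dominated_of_fderiv_le
      (F := fun z θ => c θ • f (z + circleMap 0 R θ • e))
      (F' := fun z θ => c θ • fderiv ℂ f (z + circleMap 0 R θ • e))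
      (bound := fun _ => R⁻¹ * B) (ball_mem_nhds z₀ hr) ?_
      ((hcont z₀ (mem_ball_self hr)).intervalIntegrable _ _)
      (hc.aestronglyMeasurable.smul
        ((measurable_fderiv ℂ f).comp hpath.measurable).aestronglyMeasurable) ?_
      intervalIntegrable_const ?_
    · filter_upwards [ball_mem_nhds z₀ hr] with z hz using (hcont z hz).aestronglyMeasurable
    · refine ae_of_all _ fun θ _ z hz => ?_
      grw [ContinuousLinearMap.opNorm_smul_le, hnc, hB z hz θ]
    · refine ae_of_all _ fun θ _ z hz => ?_
      exact ((hf.differentiableAt (hU.mem_nhds (hsub z hz θ))).hasFDerivAt.comp z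
        ((hasFDerivAt_id z).add_const _)).const_smul (c θ)
  rw [hcderiv]
  exact hderiv.differentiableAt.const_smul _

/-- Each directional derivative is a Cauchy integral over one-variable slices, which may be
differentiated under the integral sign thanks to the Cauchy estimates for `fderiv`. -/
theorem DifferentiableOn.fderiv_of_isOpen [FiniteDimensional ℂ E] [FiniteDimensional ℂ F]
    {U : Set E} (hU : IsOpen U) (hf : DifferentiableOn ℂ f U) :
    DifferentiableOn ℂ (fderiv ℂ f) U := by
  intro z₀ hz₀
  obtain ⟨ε, hε, hεU⟩ := isOpen_iff.1 hU z₀ hz₀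
  set r := ε / 4 with hr_def
  have hr : 0 < r := by positivity
  have h3r : closedBall z₀ (3 * r) ⊆ U :=
    (closedBall_subset_ball (by rw [hr_def]; linarith)).trans hεU
  have h2r : closedBall z₀ (2 * r) ⊆ U := (closedBall_subset_closedBall (by linarith)).trans h3r
  obtain ⟨M, hM⟩ := (isCompact_closedBall z₀ (3 * r)).exists_bound_of_continuousOn
    (hf.continuousOn.mono h3r)
  have hD : ∀ y ∈ closedBall z₀ (2 * r), ‖fderiv ℂ f y‖ ≤ 2 * M / r := fun y hy => by
    have hball : ball y r ⊆ closedBall z₀ (3 * r) := ball_subset_closedBall.trans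
      (closedBall_subset_closedBall' (by linarith [mem_closedBall.1 hy]))
    exact norm_fderiv_le_of_forall_norm_le hr (hf.mono (hball.trans h3r))
      fun x hx => hM x (hball hx)
  refine (differentiableAt_of_forall_differentiableAt_apply fun e => ?_).differentiableWithinAt
  set R := r / (‖e‖ + 1)
  have hR : 0 < R := by positivity
  have hmem : ∀ z ∈ ball z₀ r, ∀ ζ : ℂ, ‖ζ‖ ≤ R → z + ζ • e ∈ closedBall z₀ (2 * r) := by
    intro z hz ζ hζ
    have hζe : ‖ζ • e‖ ≤ r := by
      rw [norm_smul]
      calc ‖ζ‖ * ‖e‖ ≤ R * (‖e‖ + 1) := by gcongr; linarith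
        _ = r := div_mul_cancel₀ r (by positivity)
    rw [mem_closedBall, dist_eq_norm, add_sub_right_comm]
    linarith [norm_add_le (z - z₀) (ζ • e), mem_ball_iff_norm.1 hz]
  have hcircle : ∀ θ : ℝ, ‖circleMap 0 R θ‖ ≤ R := fun θ => by simp [abs_of_pos hR]
  have heq : (fun z => fderiv ℂ f z e) =ᶠ[𝓝 z₀]
      fun z => Complex.cderiv R (fun ζ : ℂ => f (z + ζ • e)) 0 :=
    eventually_of_mem (ball_mem_nhds z₀ hr) fun z hz =>
      fderiv_apply_eq_cderiv hU hf hR fun ζ hζ => h2r (hmem z hz ζ hζ)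
  exact (differentiableAt_cderiv_comp_add_smul hU hf hr hR
    (fun z hz θ => h2r (hmem z hz _ (hcircle θ)))
    (fun z hz θ => hD _ (hmem z hz _ (hcircle θ)))).congr_of_eventuallyEq heq

end HolomorphicRegularity

section RadialDerivative

variable {N : ℕ}

lemma radDn_succ' (n : ℕ) (f : EN N → ℂ) : radDn (n + 1) f = radD (radDn n f) :=
  Function.iterate_succ_apply' radD n f

lemma radDn_succ (n : ℕ) (f : EN N → ℂ) : radDn (n + 1) f = radDn n (radD f) :=
  Function.iterate_succ_apply radD n f

lemma radD_apply_zero (g : EN N → ℂ) : radD g 0 = 0 :=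
  map_zero _

lemma DifferentiableOn.radD {U : Set (EN N)} (hU : IsOpen U) {f : EN N → ℂ}
    (hf : DifferentiableOn ℂ f U) : DifferentiableOn ℂ (radD f) U :=
  (hf.fderiv_of_isOpen hU).clm_apply differentiableOn_id

lemma DifferentiableOn.radDn {U : Set (EN N)} (hU : IsOpen U) {f : EN N → ℂ}
    (hf : DifferentiableOn ℂ f U) (n : ℕ) : DifferentiableOn ℂ (radDn n f) U := by
  induction n with
  | zero => exact hf
  | succ n ih => rw [radDn_succ']; exact ih.radD hU

lemma fderiv_radD_zero {g : EN N → ℂ} (hg : DifferentiableAt ℂ (fderiv ℂ g) 0) :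
    fderiv ℂ (radD g) 0 = fderiv ℂ g 0 := by
  rw [show radD g = fun y => fderiv ℂ g y y from rfl]
  simpa using (hg.hasFDerivAt.clm_apply (hasFDerivAt_id (0 : EN N))).fderiv

lemma radDn_const_mul_comp {U : Set (EN N)} (hU : IsOpen U) {f : EN N → ℂ}
    (hf : DifferentiableOn ℂ f U) (c : ℂ) {L : EN N →L[ℂ] EN N} (hL : MapsTo L U U) (n : ℕ) :
    ∀ z ∈ U, radDn n (fun y => c * f (L y)) z = c * radDn n f (L z) := by
  induction n with
  | zero => exact fun _ _ => rfl
  | succ n ih =>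
    intro z hz
    have hev : radDn n (fun y => c * f (L y)) =ᶠ[𝓝 z] fun y => c * radDn n f (L y) :=
      eventually_of_mem (hU.mem_nhds hz) ih
    have hd : HasFDerivAt (fun y => c * radDn n f (L y))
        (c • (fderiv ℂ (radDn n f) (L z)).comp L) z :=
      (((hf.radDn hU n).differentiableAt (hU.mem_nhds (hL hz))).hasFDerivAt.comp z
        L.hasFDerivAt).const_mul c
    simp only [radDn_succ', radD, hev.fderiv_eq, hd.fderiv]
    simp

/-- The Schwarz lemma applied to `radD g`, which vanishes at the origin, bounds the derivative
of `g` along every complex line through `0`; integrate along the segment `[0, w]`. -/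
lemma norm_sub_le_of_norm_radD_le {g : EN N → ℂ} {ρ A : ℝ}
    (hg : DifferentiableOn ℂ g (ball 0 ρ)) (hA : ∀ z ∈ ball (0 : EN N) ρ, ‖radD g z‖ ≤ A)
    {w : EN N} (hw : w ∈ ball 0 ρ) : ‖g w - g 0‖ ≤ A := by
  have hρ : 0 < ρ := pos_of_mem_ball hw
  have h0 : (0 : EN N) ∈ ball 0 ρ := mem_ball_self hρ
  have hA0 : 0 ≤ A := (norm_nonneg _).trans (hA 0 h0)
  have hRg : DifferentiableOn ℂ (radD g) (ball 0 ρ) := hg.radD isOpen_ball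
  have hmaps : MapsTo (radD g) (ball 0 ρ) (closedBall (radD g 0) A) := fun z hz => by
    simpa [radD_apply_zero] using hA z hz
  have hradial : ∀ z ∈ ball (0 : EN N) ρ, ‖fderiv ℂ g z z‖ ≤ A / ρ * ‖z‖ := fun z hz => by
    simpa [radD_apply_zero, radD] using Complex.dist_le_div_mul_dist_of_mapsTo_ball hRg hmaps hz
  have hDg0 : ‖fderiv ℂ g 0‖ ≤ A / ρ := by
    rw [← fderiv_radD_zero ((hg.fderiv_of_isOpen isOpen_ball).differentiableAt
      (isOpen_ball.mem_nhds h0))]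
    exact Complex.norm_fderiv_le_div_of_mapsTo_ball hRg hmaps hρ
  have hline : ∀ ζ ∈ closedBall (0 : ℂ) 1, ζ • w ∈ ball (0 : EN N) ρ := fun ζ hζ => by
    rw [mem_ball_zero_iff, norm_smul]
    calc ‖ζ‖ * ‖w‖ ≤ 1 * ‖w‖ := by gcongr; simpa using hζ
      _ < ρ := by simpa using hw
  have hbound : ∀ ζ ∈ closedBall (0 : ℂ) 1, ‖fderiv ℂ g (ζ • w) w‖ ≤ A / ρ * ‖w‖ := by
    intro ζ hζ
    rcases eq_or_ne ζ 0 with rfl | hζ0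
    · simpa using (fderiv ℂ g 0).le_of_opNorm_le hDg0 w
    · have h := hradial _ (hline ζ hζ)
      rw [map_smul, norm_smul, norm_smul, mul_left_comm] at h
      exact le_of_mul_le_mul_left h (norm_pos_iff.2 hζ0)
  have hderiv : ∀ ζ ∈ closedBall (0 : ℂ) 1,
      HasDerivAt (fun ζ : ℂ => g (ζ • w)) (fderiv ℂ g (ζ • w) w) ζ := fun ζ hζ => by
    have hlinear : HasDerivAt (fun ζ : ℂ => ζ • w) w ζ := by
      simpa using (hasDerivAt_id ζ).smul_const w
    exact (hg.differentiableAt (isOpen_ball.mem_nhds (hline ζ hζ))).hasFDerivAt.comp_hasDerivAt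
      ζ hlinear
  have hmvt := (convex_closedBall (0 : ℂ) 1).norm_image_sub_le_of_norm_deriv_le
    (fun ζ hζ => (hderiv ζ hζ).differentiableAt)
    (fun ζ hζ => (hderiv ζ hζ).deriv ▸ hbound ζ hζ) (mem_closedBall_self zero_le_one)
    (by simp : (1 : ℂ) ∈ closedBall 0 1)
  calc ‖g w - g 0‖ ≤ A / ρ * ‖w‖ := by simpa using hmvt
    _ ≤ A / ρ * ρ := by gcongr; exact (mem_ball_zero_iff.1 hw).le
    _ = A := div_mul_cancel₀ A hρ.ne'

lemma norm_sub_le_of_norm_radDn_le (n : ℕ) {g : EN N → ℂ} {ρ A : ℝ}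
    (hg : DifferentiableOn ℂ g (ball 0 ρ))
    (hA : ∀ z ∈ ball (0 : EN N) ρ, ‖radDn (n + 1) g z‖ ≤ A) {w : EN N} (hw : w ∈ ball 0 ρ) :
    ‖g w - g 0‖ ≤ A := by
  induction n generalizing g w with
  | zero => exact norm_sub_le_of_norm_radD_le hg hA hw
  | succ n ih =>
    refine norm_sub_le_of_norm_radD_le hg (fun z hz => ?_) hw
    simpa [radD_apply_zero] using
      ih (hg.radD isOpen_ball) (fun y hy => by simpa only [← radDn_succ] using hA y hy) hz

end RadialDerivative

namespace IsNormalWeight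

variable {ν : ℝ → ℝ}

lemma exists_antitoneOn (hν : IsNormalWeight ν) : ∃ δ, 0 ≤ δ ∧ δ < 1 ∧ AntitoneOn ν (Ico δ 1) := by
  obtain ⟨δ, a, -, hδ0, hδ1, ha, -, hanti, -⟩ := hν.exists_params
  refine ⟨δ, hδ0, hδ1, fun x hx y hy hxy => ?_⟩
  have hpow : ∀ t ∈ Ico δ 1, 0 < (1 - t) ^ a := fun t ht =>
    Real.rpow_pos_of_pos (by linarith [ht.2]) a
  calc ν y = ν y / (1 - y) ^ a * (1 - y) ^ a := (div_mul_cancel₀ _ (hpow y hy).ne').symm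
    _ ≤ ν x / (1 - x) ^ a * (1 - x) ^ a :=
      mul_le_mul (hanti hx hy hxy) (Real.rpow_le_rpow (by linarith [hy.2]) (by linarith) ha.le)
        (hpow y hy).le (div_nonneg (hν.pos x ⟨hδ0.trans hx.1, hx.2⟩).le (hpow x hx).le)
    _ = ν x := div_mul_cancel₀ _ (hpow x hx).ne'

lemma exists_le_mul (hν : IsNormalWeight ν) :
    ∃ K, 1 ≤ K ∧ ∀ t u, 0 ≤ u → u ≤ t → t < 1 → ν t ≤ K * ν u := by
  obtain ⟨δ, hδ0, hδ1, hanti⟩ := hν.exists_antitoneOn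
  have hsub : Icc 0 δ ⊆ Ico 0 1 := Icc_subset_Ico_right hδ1
  have hne : (Icc (0 : ℝ) δ).Nonempty := nonempty_Icc.2 hδ0
  obtain ⟨t₁, ht₁, hmin⟩ := isCompact_Icc.exists_isMinOn hne (hν.cont.mono hsub)
  obtain ⟨t₂, -, hmax⟩ := isCompact_Icc.exists_isMaxOn hne (hν.cont.mono hsub)
  have hm : 0 < ν t₁ := hν.pos t₁ (hsub ht₁)
  have hupper : ∀ t ∈ Ico (0 : ℝ) 1, ν t ≤ ν t₂ := fun t ht => by
    rcases le_or_gt t δ with htδ | hδt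
    · exact isMaxOn_iff.1 hmax t ⟨ht.1, htδ⟩
    · exact (hanti ⟨le_rfl, hδ1⟩ ⟨hδt.le, ht.2⟩ hδt.le).trans
        (isMaxOn_iff.1 hmax δ ⟨hδ0, le_rfl⟩)
  refine ⟨max 1 (ν t₂ / ν t₁), le_max_left _ _, fun t u hu hut ht => ?_⟩
  have hνu : 0 < ν u := hν.pos u ⟨hu, hut.trans_lt ht⟩
  rcases le_or_gt δ u with hδu | huδ
  · calc ν t ≤ ν u := hanti ⟨hδu, hut.trans_lt ht⟩ ⟨hδu.trans hut, ht⟩ hut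
      _ ≤ _ := le_mul_of_one_le_left hνu.le (le_max_left _ _)
  · calc ν t ≤ ν t₂ / ν t₁ * ν t₁ := by
          rw [div_mul_cancel₀ _ hm.ne']; exact hupper t ⟨hu.trans hut, ht⟩
      _ ≤ _ := mul_le_mul (le_max_right _ _) (isMinOn_iff.1 hmin u ⟨hu, huδ.le⟩) hm.le
          (by positivity)

end IsNormalWeight

lemma exists_contraction_apply_eq {𝕜 E : Type*} [RCLike 𝕜] [NormedAddCommGroup E]
    [InnerProductSpace 𝕜 E] {w w' : E} (h : ‖w'‖ ≤ ‖w‖) :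
    ∃ L : E →L[𝕜] E, (∀ x, ‖L x‖ ≤ ‖x‖) ∧ L w = w' := by
  rcases eq_or_ne w 0 with rfl | hw
  · exact ⟨0, by simp, by simpa [eq_comm] using h⟩
  have hw' : 0 < ‖w‖ := norm_pos_iff.2 hw
  refine ⟨(innerSL 𝕜 w).smulRight (((‖w‖ : 𝕜) ^ 2)⁻¹ • w'), fun x => ?_, ?_⟩
  · simp only [ContinuousLinearMap.smulRight_apply, innerSL_apply_apply, norm_smul, norm_inv,
      norm_pow, RCLike.norm_ofReal, abs_norm]
    calc ‖inner 𝕜 w x‖ * ((‖w‖ ^ 2)⁻¹ * ‖w'‖) ≤ ‖w‖ * ‖x‖ * ((‖w‖ ^ 2)⁻¹ * ‖w‖) := by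
          gcongr; exact norm_inner_le_norm w x
      _ = ‖x‖ := by field_simp
  · rw [ContinuousLinearMap.smulRight_apply, innerSL_apply_apply, inner_self_eq_norm_sq_to_K,
      smul_smul, mul_inv_cancel₀ (by simpa using hw'.ne'), one_smul]

section PointEvaluation

variable {N : ℕ} {ν : ℝ → ℝ} {n : ℕ}

def evalSet (ν : ℝ → ℝ) (n : ℕ) (z : EN N) : Set ℝ :=
  {r | ∃ f : EN N → ℂ, MemHw ν n f ∧ growthNorm ν n f ≤ 1 ∧ r = ‖f z‖}

lemma evalNorm_nonneg (z : EN N) : 0 ≤ evalNorm ν n z :=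
  Real.sSup_nonneg <| by rintro _ ⟨f, -, -, rfl⟩; exact norm_nonneg _

lemma MemHw.norm_add_le_growthNorm {f : EN N → ℂ} (hf : MemHw ν n f) {z : EN N}
    (hz : z ∈ unitBall N) : ‖f 0‖ + ν ‖z‖ * ‖radDn n f z‖ ≤ growthNorm ν n f := by
  unfold growthNorm
  gcongr
  exact le_csSup hf.2 ⟨z, hz, rfl⟩

/-- On a smaller ball `ν` is bounded below, so `R^{(n)} f` is bounded there; `n` radial
integrations bring the bound down to `f`. -/
lemma bddAbove_evalSet (hcont : ContinuousOn ν (Ico 0 1)) (hpos : ∀ t ∈ Ico (0 : ℝ) 1, 0 < ν t)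
    {w : EN N} (hw : w ∈ unitBall N) : BddAbove (evalSet ν n w) := by
  have hw1 : ‖w‖ < 1 := mem_ball_zero_iff.1 hw
  set ρ := (‖w‖ + 1) / 2 with hρ
  have hρ1 : ρ < 1 := by linarith
  have hwρ : w ∈ ball (0 : EN N) ρ := mem_ball_zero_iff.2 (by linarith)
  obtain ⟨t₀, ht₀, hmin⟩ := isCompact_Icc.exists_isMinOn (nonempty_Icc.2 (by positivity))
    (hcont.mono (Icc_subset_Ico_right hρ1))
  have hm : 0 < ν t₀ := hpos t₀ ⟨ht₀.1, ht₀.2.trans_lt hρ1⟩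
  refine ⟨1 + (ν t₀)⁻¹, ?_⟩
  rintro _ ⟨f, hf, hf1, rfl⟩
  have hf0 : ‖f 0‖ ≤ 1 := by
    have h0 := hf.norm_add_le_growthNorm (mem_ball_self one_pos)
    rw [norm_zero] at h0
    nlinarith [hpos 0 ⟨le_rfl, one_pos⟩, norm_nonneg (radDn n f 0)]
  have hbound : ∀ z ∈ ball (0 : EN N) ρ, ‖radDn n f z‖ ≤ (ν t₀)⁻¹ := fun z hz => by
    have h1 := hf.norm_add_le_growthNorm (ball_subset_ball hρ1.le hz)
    have h2 : ν t₀ ≤ ν ‖z‖ := isMinOn_iff.1 hmin _ ⟨norm_nonneg z, (mem_ball_zero_iff.1 hz).le⟩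
    rw [← one_div, le_div_iff₀ hm]
    nlinarith [norm_nonneg (f 0), norm_nonneg (radDn n f z)]
  have hdiff : DifferentiableOn ℂ f (ball 0 ρ) := hf.1.mono (ball_subset_ball hρ1.le)
  cases n with
  | zero => exact (hbound w hwρ).trans (le_add_of_nonneg_left zero_le_one)
  | succ n =>
    calc ‖f w‖ ≤ ‖f 0‖ + ‖f w - f 0‖ := by simpa using norm_add_le (f 0) (f w - f 0)
      _ ≤ 1 + (ν t₀)⁻¹ := add_le_add hf0 (norm_sub_le_of_norm_radDn_le n hdiff hbound hwρ)

lemma inv_mul_comp_mem_evalSet {K : ℝ} (hK : 1 ≤ K)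
    (hKν : ∀ t u, 0 ≤ u → u ≤ t → t < 1 → ν t ≤ K * ν u) {L : EN N →L[ℂ] EN N}
    (hL : ∀ x, ‖L x‖ ≤ ‖x‖) {f : EN N → ℂ}
    (hf : MemHw ν n f) (hf1 : growthNorm ν n f ≤ 1) (w : EN N) :
    ‖(K : ℂ)⁻¹ * f (L w)‖ ∈ evalSet ν n w := by
  set g : EN N → ℂ := fun y => (K : ℂ)⁻¹ * f (L y)
  have hK0 : 0 < K := one_pos.trans_le hK
  have hLB : MapsTo L (unitBall N) (unitBall N) := fun x hx =>
    mem_ball_zero_iff.2 ((hL x).trans_lt (mem_ball_zero_iff.1 hx))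
  have hnK : ‖(K : ℂ)⁻¹‖ = K⁻¹ := by simp [abs_of_pos hK0]
  have hle : ∀ x ∈ growthSet ν n g, x ≤ sSup (growthSet ν n f) := by
    rintro _ ⟨z, hz, rfl⟩
    have hνz : ν ‖z‖ * K⁻¹ ≤ ν ‖L z‖ := by
      rw [mul_inv_le_iff₀ hK0, mul_comm]
      exact hKν _ _ (norm_nonneg _) (hL z) (mem_ball_zero_iff.1 hz)
    calc ν ‖z‖ * ‖radDn n g z‖ = ν ‖z‖ * K⁻¹ * ‖radDn n f (L z)‖ := by
          rw [radDn_const_mul_comp isOpen_ball hf.1 _ hLB n z hz, norm_mul, hnK, mul_assoc]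
      _ ≤ ν ‖L z‖ * ‖radDn n f (L z)‖ := by gcongr
      _ ≤ sSup (growthSet ν n f) := le_csSup hf.2 ⟨L z, hLB hz, rfl⟩
  refine ⟨g, ⟨(hf.1.comp L.differentiableOn hLB).const_mul _, ⟨_, hle⟩⟩, ?_, rfl⟩
  calc growthNorm ν n g = K⁻¹ * ‖f 0‖ + sSup (growthSet ν n g) := by
        simp [growthNorm, g, hnK]
    _ ≤ ‖f 0‖ + sSup (growthSet ν n f) :=
        add_le_add (mul_le_of_le_one_left (norm_nonneg _) (inv_le_one_of_one_le₀ hK))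
          (csSup_le ((nonempty_ball.2 one_pos).image _) hle)
    _ ≤ 1 := hf1

lemma evalNorm_le_mul_of_norm_le {K : ℝ} (hK : 1 ≤ K)
    (hKν : ∀ t u, 0 ≤ u → u ≤ t → t < 1 → ν t ≤ K * ν u) {w w' : EN N}
    (hw : BddAbove (evalSet ν n w)) (hle : ‖w'‖ ≤ ‖w‖) : evalNorm ν n w' ≤ K * evalNorm ν n w := by
  have hK0 : 0 < K := one_pos.trans_le hK
  obtain ⟨L, hL, hLw⟩ := exists_contraction_apply_eq (𝕜 := ℂ) hle
  refine Real.sSup_le ?_ (mul_nonneg hK0.le (evalNorm_nonneg w))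
  rintro _ ⟨f, hf, hf1, rfl⟩
  have h := le_csSup hw (inv_mul_comp_mem_evalSet hK hKν hL hf hf1 w)
  rw [norm_mul, hLw, norm_inv, Complex.norm_real, Real.norm_of_nonneg hK0.le,
    inv_mul_le_iff₀ hK0] at h
  exact h

end PointEvaluation

lemma exists_apply_eq_smul_single_le_norm {N : ℕ} {p : Fin N} {φ : EN N → EN N}
    (hφ : φ ∈ starS p) (hφ0 : φ 0 = 0) {s : ℝ} (hs0 : 0 ≤ s) (hs1 : s < 1) :
    ∃ z ∈ unitBall N, φ z = (s : ℂ) • EuclideanSpace.single p 1 ∧ s ≤ ‖z‖ := by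
  obtain ⟨z, hz, hφz⟩ := hφ.2 s (by simpa [abs_of_nonneg hs0] using hs1)
  refine ⟨z, hz, hφz, ?_⟩
  calc s = ‖φ z‖ := by rw [hφz, norm_smul]; simp [abs_of_nonneg hs0]
    _ ≤ ‖z‖ := Complex.norm_le_norm_of_mapsTo_ball hφ.1.1
      (hφ.1.2.mono_right ball_subset_closedBall) hφ0 (mem_ball_zero_iff.1 hz)

theorem stmt_4_general {N : ℕ} (p : Fin N) (ν : ℝ → ℝ) (hν : IsNormalWeight ν)
    (h : EN N → ℝ)
    (hbdd : ∃ M : ℝ, ∀ z ∈ unitBall N, h z ≤ M)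
    (hliminf : ∃ c > (0:ℝ), ∃ r < (1:ℝ), ∀ z ∈ unitBall N, r < ‖z‖ → c ≤ h z)
    (j : ℕ)
    (φ : EN N → EN N) (hφ : φ ∈ starS p) (hφ0 : φ 0 = 0)
    (hM : BddAbove
      ((fun w => h w * evalNorm ν j ((φ w p) • EuclideanSpace.single p (1:ℂ))) ''
        unitBall N)) :
    ∃ C > (0:ℝ), ∀ z ∈ unitBall N,
      h z * evalNorm ν j (φ z) ≤
        C * sSup ((fun w => h w * evalNorm ν j ((φ w p) • EuclideanSpace.single p (1:ℂ))) ''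
          unitBall N) := by
  obtain ⟨M, hhM⟩ := hbdd
  obtain ⟨c, hc, r, hr, hcr⟩ := hliminf
  obtain ⟨K, hK, hKν⟩ := hν.exists_le_mul
  set S := sSup ((fun w => h w * evalNorm ν j ((φ w p) • EuclideanSpace.single p (1:ℂ))) ''
    unitBall N)
  refine ⟨max M 1 * K / c, by positivity, fun z hz => ?_⟩
  set s := max ‖φ z‖ ((r + 1) / 2)
  set ws : EN N := (s : ℂ) • EuclideanSpace.single p 1
  have hs0 : 0 ≤ s := le_max_of_le_left (norm_nonneg _)
  have hs1 : s < 1 := max_lt (mem_ball_zero_iff.1 (hφ.1.2 hz)) (by linarith)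
  have hrs : r < s := lt_max_of_lt_right (by linarith)
  have hws : ‖ws‖ = s := by rw [norm_smul]; simp [abs_of_nonneg hs0]
  obtain ⟨z', hz', hφz', hsz'⟩ := exists_apply_eq_smul_single_le_norm hφ hφ0 hs0 hs1
  have hpeak : c * evalNorm ν j ws ≤ S :=
    (mul_le_mul_of_nonneg_right (hcr z' hz' (hrs.trans_le hsz')) (evalNorm_nonneg _)).trans
      (le_csSup hM ⟨z', hz', by simp [ws, hφz']⟩)
  have htransfer : evalNorm ν j (φ z) ≤ K * evalNorm ν j ws :=
    evalNorm_le_mul_of_norm_le hK hKν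
      (bddAbove_evalSet hν.cont hν.pos (mem_ball_zero_iff.2 (hws ▸ hs1)))
      (hws ▸ le_max_left _ _)
  calc h z * evalNorm ν j (φ z) ≤ max M 1 * (K * evalNorm ν j ws) :=
        mul_le_mul ((hhM z hz).trans (le_max_left _ _)) htransfer (evalNorm_nonneg _)
          (by positivity)
    _ = max M 1 * K / c * (c * evalNorm ν j ws) := by field_simp
    _ ≤ max M 1 * K / c * S := by gcongr

/-- Lemma on `S_p^*(B)`: if `φ ∈ S_p^*(B)`, `φ(0)=0` and
`M_p^j = sup_w h(w)‖δ_{φ_p(w)}^{H_ν^{(j)}}‖ < ∞`, then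
`sup_z h(z)‖δ_{φ(z)}^{H_ν^{(j)}}‖ ≤ C_j M_p^j`. -/
theorem stmt_4 {N : ℕ} (p : Fin N) (ν : ℝ → ℝ) (hν : IsNormalWeight ν)
    (h : EN N → ℝ)
    (hpos : ∀ z ∈ unitBall N, 0 < h z)
    (hbdd : ∃ M : ℝ, ∀ z ∈ unitBall N, h z ≤ M)
    (hliminf : ∃ c > (0:ℝ), ∃ r < (1:ℝ), ∀ z ∈ unitBall N, r < ‖z‖ → c ≤ h z)
    (j : ℕ) (hj : 1 ≤ j)
    (φ : EN N → EN N) (hφ : φ ∈ starS p) (hφ0 : φ 0 = 0)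
    (hM : BddAbove
      ((fun w => h w * evalNorm ν j ((φ w p) • EuclideanSpace.single p (1:ℂ))) ''
        unitBall N)) :
    ∃ C > (0:ℝ), ∀ z ∈ unitBall N,
      h z * evalNorm ν j (φ z) ≤
        C * sSup ((fun w => h w * evalNorm ν j ((φ w p) • EuclideanSpace.single p (1:ℂ))) ''
          unitBall N) :=
  stmt_4_general p ν hν h hbdd hliminf j φ hφ hφ0 hM
end

section
/- Fix α ∈ (0,1) and p ∈ {1,…,N}. There exists q₀ ∈ ℕ such that for every integer q ≥ q₀ the following holds. Define ψ̃(z) = Σ_{i=0}^∞ q^{i(α−1)+α/2} z_p^{q^i} for z ∈ B (the series converges locally uniformly on B, so ψ̃ ∈ H(B), and Rψ̃(z) = Σ_{i=0}^∞ q^{i(α−1)+α/2+i} z_p^{q^i}). Then for every k ∈ ℕ and every z ∈ B satisfying 1 − 1/q^k ≤ |z_p| ≤ |z| ≤ 1 − 1/q^{k+1/2}, one has |Rψ̃(z)| ≥ (1/4)·(1−|z|)^{−α}. -/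
open scoped BigOperators ComplexConjugate
open MeasureTheory Filter Set

/-!
Write `x = q^α`. On `B` the radial derivative of `ψ̃` is `q^{α/2} Σ_i x^i z_p^{q^i}`, since
`R(z_p^n) = n z_p^n`. On the annulus `1 - q^{-k} ≤ |z_p| ≤ 1 - q^{-k-1/2}` the `k`-th term
dominates: it has modulus at least `x^k (1 - q^{-k})^{q^k} ≈ x^k / e`, the earlier terms add up to
at most `x^k / (x - 1)`, and the later ones to at most `x^k Σ_{j ≥ 1} (q e^{-√q})^j`, because
`|z_p|^{q^{k+j}} ≤ exp(-q^{j-1/2})`. For large `q` this leaves more than `x^k / 4`, and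
`x^k q^{α/2} = q^{α(k+1/2)} ≥ (1 - |z|)^{-α}`.
-/

open Real

theorem summable_mul_pow_pow_of_lt_one {q : ℕ} (hq : 2 ≤ q) (A : ℝ) {r : ℝ} (hr0 : 0 ≤ r)
    (hr1 : r < 1) : Summable fun i : ℕ => A ^ i * r ^ q ^ i := by
  have hsmall : ∀ᶠ i in atTop, ‖A‖ * r ^ i < 1 / 2 := by
    have := (tendsto_pow_atTop_nhds_zero_of_lt_one hr0 hr1).const_mul ‖A‖
    rw [mul_zero] at this
    exact this.eventually (gt_mem_nhds (by norm_num))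
  refine summable_of_ratio_norm_eventually_le (r := 1 / 2) (by norm_num) ?_
  filter_upwards [hsmall] with i hi
  have hgap : q ^ i + i ≤ q ^ (i + 1) := by
    have := Nat.lt_pow_self (n := i) (show 1 < q by omega)
    rw [pow_succ]; nlinarith
  calc ‖A ^ (i + 1) * r ^ q ^ (i + 1)‖ = ‖A‖ * ‖A‖ ^ i * r ^ q ^ (i + 1) := by
        rw [norm_mul, norm_pow, norm_pow, norm_of_nonneg hr0, pow_succ']
    _ ≤ ‖A‖ * ‖A‖ ^ i * r ^ (q ^ i + i) :=
        mul_le_mul_of_nonneg_left (pow_le_pow_of_le_one hr0 hr1.le hgap) (by positivity)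
    _ = (‖A‖ * r ^ i) * ‖A ^ i * r ^ q ^ i‖ := by
        rw [norm_mul, norm_pow, norm_pow, norm_of_nonneg hr0, pow_add]; ring
    _ ≤ 1 / 2 * ‖A ^ i * r ^ q ^ i‖ := by gcongr

theorem hasDerivAt_tsum_mul_pow {c : ℕ → ℂ} {n : ℕ → ℕ} (hn : ∀ i, n i ≠ 0)
    (hc : ∀ r : ℝ, 0 ≤ r → r < 1 → Summable fun i => ‖c i‖ * n i * r ^ n i) {w : ℂ}
    (hw : ‖w‖ < 1) :
    HasDerivAt (fun y => ∑' i, c i * y ^ n i) (∑' i, c i * n i * w ^ (n i - 1)) w := by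
  set r : ℝ := (1 + ‖w‖) / 2 with hr
  have hr0 : 0 < r := by positivity
  have hwr : ‖w‖ < r := by linarith
  have hu : Summable fun i => ‖c i‖ * n i * r ^ (n i - 1) := by
    refine ((hc r hr0.le (by linarith)).mul_left r⁻¹).congr fun i => ?_
    rw [← pow_sub_one_mul (hn i)]; field_simp
  refine hasDerivAt_tsum_of_isPreconnected (g := fun i y => c i * y ^ n i)
    (g' := fun i y => c i * n i * y ^ (n i - 1)) hu Metric.isOpen_ball
    (convex_ball (0 : ℂ) r).isPreconnected (fun i y _ => ?_) (fun i y hy => ?_)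
    (Metric.mem_ball_self hr0) ?_ (mem_ball_zero_iff.2 hwr)
  · simpa [mul_assoc, mul_comm, mul_left_comm] using (hasDerivAt_pow (n i) y).const_mul (c i)
  · rw [mem_ball_zero_iff] at hy
    rw [norm_mul, norm_mul, norm_pow, Complex.norm_natCast]
    gcongr
  · simp [zero_pow (hn _)]

theorem tsum_mul_pow_sub_one_mul {n : ℕ → ℕ} (hn : ∀ i, n i ≠ 0) (c : ℕ → ℂ) (w : ℂ) :
    (∑' i, c i * n i * w ^ (n i - 1)) * w = ∑' i, c i * n i * w ^ n i := by
  rw [← tsum_mul_right]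
  simp_rw [mul_assoc, pow_sub_one_mul (hn _)]

theorem norm_sum_range_pow_mul_pow_le {x : ℝ} (hx : 1 < x) {w : ℂ} (hw : ‖w‖ ≤ 1)
    (n : ℕ → ℕ) (k : ℕ) :
    ‖∑ i ∈ Finset.range k, (x : ℂ) ^ i * w ^ n i‖ ≤ x ^ k / (x - 1) := by
  have hx1 : 0 < x - 1 := by linarith
  calc ‖∑ i ∈ Finset.range k, (x : ℂ) ^ i * w ^ n i‖
      ≤ ∑ i ∈ Finset.range k, x ^ i := by
        refine (norm_sum_le _ _).trans (Finset.sum_le_sum fun i _ => ?_)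
        rw [norm_mul, norm_pow, norm_pow, Complex.norm_real, norm_of_nonneg (by linarith)]
        exact mul_le_of_le_one_right (by positivity) (pow_le_one₀ (norm_nonneg w) hw)
    _ = (x ^ k - 1) / (x - 1) := geom_sum_eq hx.ne' k
    _ ≤ x ^ k / (x - 1) := by gcongr; linarith

theorem pow_pow_le_exp_neg_sqrt {q : ℕ} (hq : 2 ≤ q) {r : ℝ} (hr0 : 0 ≤ r) {k : ℕ}
    (hr : r ≤ 1 - 1 / (q ^ k * √q)) (j : ℕ) :
    r ^ q ^ (j + (k + 1)) ≤ exp (-√q) ^ (j + 1) := by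
  have hq0 : (0 : ℝ) < q := by positivity
  have hexp : q ^ (j + (k + 1)) / ((q : ℝ) ^ k * √q) = (q : ℝ) ^ j * √q := by
    field_simp
    rw [sq_sqrt hq0.le]; ring
  have hj : (j : ℝ) + 1 ≤ (q : ℝ) ^ j := by
    exact_mod_cast Nat.lt_pow_self (n := j) (show 1 < q by omega)
  calc r ^ q ^ (j + (k + 1)) ≤ exp (-(1 / (q ^ k * √q))) ^ q ^ (j + (k + 1)) :=
        pow_le_pow_left₀ hr0 (hr.trans (one_sub_le_exp_neg _)) _
    _ = exp (-((q : ℝ) ^ j * √q)) := by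
        rw [← exp_nat_mul, ← hexp]; push_cast; ring_nf
    _ ≤ exp (-((j + 1) * √q)) := by gcongr
    _ = exp (-√q) ^ (j + 1) := by rw [← exp_nat_mul]; push_cast; ring_nf

theorem norm_tsum_shift_pow_mul_pow_pow_le {q : ℕ} (hq : 2 ≤ q) {x : ℝ} (hx0 : 0 ≤ x)
    (hxq : x ≤ q) (hρ : q * exp (-√q) < 1) {k : ℕ} {w : ℂ} (hw : ‖w‖ ≤ 1 - 1 / (q ^ k * √q)) :
    ‖∑' j, (x : ℂ) ^ (j + (k + 1)) * w ^ q ^ (j + (k + 1))‖ ≤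
      x ^ k * (q * exp (-√q)) * (1 - q * exp (-√q))⁻¹ := by
  set ρ := q * exp (-√q)
  refine tsum_of_norm_bounded
    ((hasSum_geometric_of_lt_one (by positivity) hρ).mul_left (x ^ k * ρ)) fun j => ?_
  rw [norm_mul, norm_pow, norm_pow, Complex.norm_real, norm_of_nonneg hx0]
  calc x ^ (j + (k + 1)) * ‖w‖ ^ q ^ (j + (k + 1))
        ≤ x ^ (j + (k + 1)) * exp (-√q) ^ (j + 1) :=
        mul_le_mul_of_nonneg_left (pow_pow_le_exp_neg_sqrt hq (norm_nonneg w) hw j)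
          (by positivity)
    _ = x ^ k * (x * exp (-√q)) ^ (j + 1) := by ring
    _ ≤ x ^ k * ρ ^ (j + 1) := by gcongr; exact mul_le_mul_of_nonneg_right hxq (exp_pos _).le
    _ = x ^ k * ρ * ρ ^ j := by ring

theorem le_norm_tsum_pow_mul_pow_pow {q : ℕ} (hq : 2 ≤ q) {x : ℝ} (hx : 1 < x) (hxq : x ≤ q)
    (hρ : q * exp (-√q) < 1) {k : ℕ} {w : ℂ} (hw : ‖w‖ ≤ 1 - 1 / (q ^ k * √q)) :
    x ^ k * ‖w‖ ^ q ^ k - x ^ k / (x - 1) -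
        x ^ k * (q * exp (-√q)) * (1 - q * exp (-√q))⁻¹ ≤
      ‖∑' i, (x : ℂ) ^ i * w ^ q ^ i‖ := by
  set f : ℕ → ℂ := fun i => (x : ℂ) ^ i * w ^ q ^ i
  have hnorm : ∀ i, ‖f i‖ = x ^ i * ‖w‖ ^ q ^ i := fun i => by
    simp only [f, norm_mul, norm_pow, Complex.norm_real, norm_of_nonneg (by linarith : 0 ≤ x)]
  have hw1 : ‖w‖ < 1 := hw.trans_lt (sub_lt_self 1 (by positivity))
  have hf : Summable f := .of_norm <| by
    simpa only [hnorm] using summable_mul_pow_pow_of_lt_one hq x (norm_nonneg w) hw1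
  have hsplit : ∑' i, f i - ∑ i ∈ Finset.range k, f i - ∑' j, f (j + (k + 1)) = f k := by
    rw [← hf.sum_add_tsum_nat_add (k + 1), Finset.sum_range_succ]; ring
  have htri := norm_sub_le (∑' i, f i - ∑ i ∈ Finset.range k, f i) (∑' j, f (j + (k + 1)))
  have htri' := norm_sub_le (∑' i, f i) (∑ i ∈ Finset.range k, f i)
  rw [hsplit, hnorm] at htri
  have := norm_sum_range_pow_mul_pow_le hx hw1.le (q ^ ·) k
  have := norm_tsum_shift_pow_mul_pow_pow_le hq (by linarith) hxq hρ hw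
  linarith

-- With these constants the `k`-th term beats the rest by `3/10 - 1/40 - 1/40 = 1/4`.
theorem eventually_lacunary_constants {α : ℝ} (hα : 0 < α) :
    ∀ᶠ q : ℕ in atTop, 2 ≤ q ∧ 41 ≤ (q : ℝ) ^ α ∧ q * exp (-√q) ≤ 1 / 41 ∧
      ∀ n ≥ q, 3 / 10 ≤ (1 - 1 / (n : ℝ)) ^ n := by
  have hpow : ∀ᶠ q : ℕ in atTop, 41 ≤ (q : ℝ) ^ α :=
    ((tendsto_rpow_atTop hα).comp tendsto_natCast_atTop_atTop).eventually_ge_atTop 41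
  have hexp : ∀ᶠ q : ℕ in atTop, q * exp (-√q) ≤ 1 / 41 := by
    have h := (tendsto_pow_mul_exp_neg_atTop_nhds_zero 2).comp
      (tendsto_sqrt_atTop.comp tendsto_natCast_atTop_atTop)
    refine (h.eventually (ge_mem_nhds (by norm_num : (0 : ℝ) < 1 / 41))).mono fun q hq => ?_
    simpa [sq_sqrt (Nat.cast_nonneg q)] using hq
  have hhead : ∀ᶠ n : ℕ in atTop, 3 / 10 ≤ (1 - 1 / (n : ℝ)) ^ n := by
    have he : 3 / 10 < exp (-1) := by
      rw [exp_neg, lt_inv_comm₀ (by norm_num) (exp_pos 1)]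
      linarith [exp_one_lt_d9]
    refine ((tendsto_one_add_div_pow_exp (-1)).eventually (le_mem_nhds he)).mono fun n hn => ?_
    simpa [neg_div, ← sub_eq_add_neg] using hn
  exact (eventually_ge_atTop 2).and (hpow.and (hexp.and (eventually_forall_ge_atTop.2 hhead)))

theorem div_four_le_norm_tsum_pow_mul_pow_pow {q : ℕ} (hq : 2 ≤ q) {x : ℝ} (hx : 41 ≤ x)
    (hxq : x ≤ q) (hρ : q * exp (-√q) ≤ 1 / 41) {k : ℕ} {w : ℂ}
    (hhead : 3 / 10 ≤ ‖w‖ ^ q ^ k) (hw : ‖w‖ ≤ 1 - 1 / (q ^ k * √q)) :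
    x ^ k / 4 ≤ ‖∑' i, (x : ℂ) ^ i * w ^ q ^ i‖ := by
  have hxk : 0 < x ^ k := by positivity
  have hlow : x ^ k / (x - 1) ≤ x ^ k / 40 := by gcongr; linarith
  have htail : q * exp (-√q) * (1 - q * exp (-√q))⁻¹ ≤ 1 / 40 := by
    rw [← div_eq_mul_inv, div_le_iff₀ (by linarith)]; linarith
  have := le_norm_tsum_pow_mul_pow_pow hq (by linarith) hxq (by linarith) hw
  nlinarith [mul_le_mul_of_nonneg_left htail hxk.le, mul_le_mul_of_nonneg_left hhead hxk.le]

section Radial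

variable {N : ℕ} (p : Fin N)

theorem hasFDerivAt_comp_apply {g : ℂ → ℂ} {g' : ℂ} {z : EN N} (h : HasDerivAt g g' (z p)) :
    HasFDerivAt (fun z : EN N => g (z p)) (g' • EuclideanSpace.proj (𝕜 := ℂ) p) z :=
  h.comp_hasFDerivAt z (EuclideanSpace.proj (𝕜 := ℂ) p).hasFDerivAt

theorem radD_comp_apply {g : ℂ → ℂ} {g' : ℂ} {z : EN N} (h : HasDerivAt g g' (z p)) :
    radD (fun z : EN N => g (z p)) z = g' * z p := by
  simp [radD, (hasFDerivAt_comp_apply p h).fderiv]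

variable {c : ℕ → ℂ} {n : ℕ → ℕ}

theorem differentiableOn_tsum_mul_pow_apply (hn : ∀ i, n i ≠ 0)
    (hc : ∀ r : ℝ, 0 ≤ r → r < 1 → Summable fun i => ‖c i‖ * n i * r ^ n i) :
    DifferentiableOn ℂ (fun z : EN N => ∑' i, c i * z p ^ n i) (unitBall N) := fun z hz =>
  (hasFDerivAt_comp_apply p (hasDerivAt_tsum_mul_pow hn hc
    ((PiLp.norm_apply_le z p).trans_lt (mem_ball_zero_iff.1 hz))))
    |>.differentiableAt.differentiableWithinAt

theorem radD_tsum_mul_pow_apply (hn : ∀ i, n i ≠ 0)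
    (hc : ∀ r : ℝ, 0 ≤ r → r < 1 → Summable fun i => ‖c i‖ * n i * r ^ n i) {z : EN N}
    (hz : z ∈ unitBall N) :
    radD (fun z : EN N => ∑' i, c i * z p ^ n i) z = ∑' i, c i * n i * z p ^ n i := by
  rw [radD_comp_apply p (hasDerivAt_tsum_mul_pow hn hc
    ((PiLp.norm_apply_le z p).trans_lt (mem_ball_zero_iff.1 hz))), tsum_mul_pow_sub_one_mul hn]

end Radial

theorem rpow_lacunary_exponent {q : ℝ} (hq : 0 < q) (α : ℝ) (i : ℕ) :
    q ^ ((i : ℝ) * (α - 1) + α / 2 + i) = q ^ (α / 2) * (q ^ α) ^ i := by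
  rw [← rpow_natCast, ← rpow_mul hq.le, ← rpow_add hq]; ring_nf

theorem one_sub_rpow_neg_le {q : ℝ} (hq : 0 < q) {α : ℝ} (hα : 0 ≤ α) {k : ℕ} {R : ℝ}
    (hR : R ≤ 1 - 1 / q ^ ((k : ℝ) + 1 / 2)) :
    (1 - R) ^ (-α) ≤ q ^ (α / 2) * (q ^ α) ^ k := by
  calc (1 - R) ^ (-α) ≤ (1 / q ^ ((k : ℝ) + 1 / 2)) ^ (-α) :=
        rpow_le_rpow_of_nonpos (by positivity) (by linarith) (by linarith)
    _ = q ^ (α / 2) * (q ^ α) ^ k := by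
        rw [one_div, ← rpow_neg hq.le, ← rpow_mul hq.le, ← rpow_natCast, ← rpow_mul hq.le,
          ← rpow_add hq]
        ring_nf

section LacunaryCoefficients

variable {q : ℕ} (α : ℝ)

theorem rpow_mul_pow_eq_rpow_add (hq : 0 < q) (i : ℕ) :
    (q : ℝ) ^ ((i : ℝ) * (α - 1) + α / 2) * (q : ℝ) ^ i =
      (q : ℝ) ^ ((i : ℝ) * (α - 1) + α / 2 + i) := by
  rw [← rpow_natCast, ← rpow_add (by positivity)]

theorem summable_norm_rpow_mul_natCast_pow (hq : 2 ≤ q) {r : ℝ} (hr0 : 0 ≤ r) (hr1 : r < 1) :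
    Summable fun i : ℕ =>
      ‖(((q : ℝ) ^ ((i : ℝ) * (α - 1) + α / 2) : ℝ) : ℂ)‖ * (q ^ i : ℕ) * r ^ q ^ i := by
  have hnorm : ∀ i : ℕ,
      ‖(((q : ℝ) ^ ((i : ℝ) * (α - 1) + α / 2) : ℝ) : ℂ)‖ * (q ^ i : ℕ) =
        (q : ℝ) ^ (α / 2) * ((q : ℝ) ^ α) ^ i := fun i => by
    rw [Complex.norm_real, norm_of_nonneg (by positivity), Nat.cast_pow,
      rpow_mul_pow_eq_rpow_add α (by omega), rpow_lacunary_exponent (by positivity)]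
  simpa only [hnorm, mul_assoc] using
    (summable_mul_pow_pow_of_lt_one hq _ hr0 hr1).mul_left ((q : ℝ) ^ (α / 2))

theorem radD_tsum_rpow_mul_pow_apply (hq : 2 ≤ q) {N : ℕ} (p : Fin N) {z : EN N}
    (hz : z ∈ unitBall N) :
    radD (fun z : EN N => ∑' i : ℕ,
        (((q : ℝ) ^ ((i : ℝ) * (α - 1) + α / 2) : ℝ) : ℂ) * z p ^ q ^ i) z =
      ∑' i : ℕ, (((q : ℝ) ^ ((i : ℝ) * (α - 1) + α / 2 + i) : ℝ) : ℂ) * z p ^ q ^ i := by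
  rw [radD_tsum_mul_pow_apply p (fun i => by positivity)
    (fun r => summable_norm_rpow_mul_natCast_pow α hq) hz]
  refine tsum_congr fun i => ?_
  rw [← rpow_mul_pow_eq_rpow_add α (by omega : 0 < q)]; push_cast; rfl

theorem tsum_rpow_mul_pow_eq (hq : 0 < q) (w : ℂ) :
    ∑' i : ℕ, (((q : ℝ) ^ ((i : ℝ) * (α - 1) + α / 2 + i) : ℝ) : ℂ) * w ^ q ^ i =
      ((q : ℝ) ^ (α / 2) : ℝ) * ∑' i : ℕ, (((q : ℝ) ^ α : ℝ) : ℂ) ^ i * w ^ q ^ i := by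
  rw [← tsum_mul_left]
  exact tsum_congr fun i => by rw [rpow_lacunary_exponent (by positivity)]; push_cast; ring

end LacunaryCoefficients

theorem quarter_mul_one_sub_rpow_neg_le_rpow_mul_norm_tsum {q : ℕ} (hq : 2 ≤ q) {α : ℝ}
    (hα0 : 0 < α) (hα1 : α < 1) (hx : 41 ≤ (q : ℝ) ^ α) (hρ : q * exp (-√q) ≤ 1 / 41)
    (hhead : ∀ n ≥ q, 3 / 10 ≤ (1 - 1 / (n : ℝ)) ^ n) {k : ℕ} (hk : 1 ≤ k) {w : ℂ} {R : ℝ}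
    (hlo : 1 - 1 / (q : ℝ) ^ k ≤ ‖w‖) (hwR : ‖w‖ ≤ R)
    (hR : R ≤ 1 - 1 / (q : ℝ) ^ ((k : ℝ) + 1 / 2)) :
    1 / 4 * (1 - R) ^ (-α) ≤
      (q : ℝ) ^ (α / 2) * ‖∑' i, (((q : ℝ) ^ α : ℝ) : ℂ) ^ i * w ^ q ^ i‖ := by
  have hq1 : (1 : ℝ) ≤ q := by exact_mod_cast hq.trans' one_le_two
  have hxq : (q : ℝ) ^ α ≤ q := by simpa using rpow_le_rpow_of_exponent_le hq1 hα1.le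
  have hw : ‖w‖ ≤ 1 - 1 / (q ^ k * √q) := by
    rw [rpow_add (by positivity), rpow_natCast, ← sqrt_eq_rpow] at hR
    exact hwR.trans hR
  have hwk : 3 / 10 ≤ ‖w‖ ^ q ^ k := by
    calc (3 / 10 : ℝ) ≤ (1 - 1 / ((q ^ k : ℕ) : ℝ)) ^ q ^ k :=
          hhead _ (Nat.le_self_pow (by omega) q)
      _ ≤ ‖w‖ ^ q ^ k := by
          push_cast
          exact pow_le_pow_left₀ (sub_nonneg.2 (div_le_one_of_le₀ (one_le_pow₀ hq1)
            (by positivity))) hlo _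
  have := div_four_le_norm_tsum_pow_mul_pow_pow hq hx hxq hρ hwk hw
  calc 1 / 4 * (1 - R) ^ (-α) ≤ 1 / 4 * ((q : ℝ) ^ (α / 2) * ((q : ℝ) ^ α) ^ k) := by
        gcongr; exact one_sub_rpow_neg_le (by positivity) hα0.le hR
    _ ≤ _ := by nlinarith [rpow_pos_of_pos (by positivity : (0 : ℝ) < q) (α / 2)]

/-- the lacunary series `ψ̃(z) = Σ_i q^{i(α−1)+α/2} z_p^{q^i}` is holomorphic
on `B`, its radial derivative is the series `Σ_i q^{i(α−1)+α/2+i} z_p^{q^i}`, and for `q`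
large and `1 − 1/q^k ≤ |z_p| ≤ |z| ≤ 1 − 1/q^{k+1/2}` one has
`|Rψ̃(z)| ≥ (1/4)(1−|z|)^{−α}`. -/
theorem stmt_19 {N : ℕ} (p : Fin N) (α : ℝ) (hα0 : 0 < α) (hα1 : α < 1) :
    ∃ q₀ : ℕ, ∀ q : ℕ, q₀ ≤ q →
      ∀ ψt : EN N → ℂ,
        (∀ z : EN N, ψt z =
          ∑' i : ℕ, (((q : ℝ) ^ ((i : ℝ) * (α - 1) + α / 2) : ℝ) : ℂ) * (z p) ^ (q ^ i)) →
        ψt ∈ HolB N ∧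
        (∀ z ∈ unitBall N, radD ψt z =
          ∑' i : ℕ,
            (((q : ℝ) ^ ((i : ℝ) * (α - 1) + α / 2 + (i : ℝ)) : ℝ) : ℂ) * (z p) ^ (q ^ i)) ∧
        (∀ k : ℕ, 1 ≤ k → ∀ z ∈ unitBall N,
          1 - 1 / (q : ℝ) ^ k ≤ ‖z p‖ → ‖z p‖ ≤ ‖z‖ →
          ‖z‖ ≤ 1 - 1 / ((q : ℝ) ^ ((k : ℝ) + 1 / 2)) →
          (1 / 4) * (1 - ‖z‖) ^ (-α) ≤ ‖radD ψt z‖) := by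
  obtain ⟨q₀, hq₀⟩ := eventually_atTop.1 (eventually_lacunary_constants hα0)
  refine ⟨q₀, fun q hq ψt hψ => ?_⟩
  obtain ⟨hq2, hx41, hρ, hhead⟩ := hq₀ q hq
  obtain rfl : ψt = _ := funext hψ
  refine ⟨differentiableOn_tsum_mul_pow_apply p (fun i => by positivity)
    (fun r => summable_norm_rpow_mul_natCast_pow α hq2),
    fun z hz => radD_tsum_rpow_mul_pow_apply α hq2 p hz, ?_⟩
  intro k hk z hz hlo hle hhi
  rw [radD_tsum_rpow_mul_pow_apply α hq2 p hz, tsum_rpow_mul_pow_eq α (by omega), norm_mul,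
    Complex.norm_real, norm_of_nonneg (by positivity)]
  exact quarter_mul_one_sub_rpow_neg_le_rpow_mul_norm_tsum hq2 hα0 hα1 hx41 hρ hhead hk hlo hle
    hhi
end
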